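/- For every K > 0, the system of equations l(r₂) − l(r₁) = 2K and 1/(r₂(1−r₂)) = 1/(r₁(1−r₁)) has a unique solution (r₁, r₂) with 0 < r₁ < r₂ < 1, and this solution satisfies r₁ = 1 − r₂ and l(r₂) = K. (This is the reduction of the Bayesian sequential probability ratio test equations in the payoff-symmetric case a = b, with K = b/ĉ.) -/

import Mathlib

/-- `l(r) = 2·log(r/(1−r)) − 1/r + 1/(1−r)`. -/
noncomputable def l (r : ℝ) : ℝ := 2 * Real.log (r / (1 - r)) - 1 / r + 1 / (1 - r)

/-
The equation `1/(r₂(1-r₂)) = 1/(r₁(1-r₁))` with `r₁ ≠ r₂` forces `r₁ + r₂ = 1`, since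
`r(1-r)` is symmetric about `1/2`. The function `l` is odd about `1/2`, i.e. `l (1 - r) = -l r`,
so the first equation becomes `2 l(r₂) = 2K`. On `(0,1)` the function `l` is a continuous strictly
increasing function with `l(1/2) = 0` and `l(r) → ∞` as `r → 1`, so `l(r₂) = K` has exactly one
root, and it lies in `(1/2, 1)`.
-/

open Set

lemma l_one_sub (r : ℝ) : l (1 - r) = -l r := by
  rw [l, l, sub_sub_cancel, ← inv_div, Real.log_inv]
  ring

lemma l_half : l (1 / 2) = 0 := by
  norm_num [l]

lemma l_strictMonoOn : StrictMonoOn l (Ioo 0 1) := by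
  intro x ⟨hx0, hx1⟩ y ⟨hy0, hy1⟩ hxy
  have hodds : x / (1 - x) < y / (1 - y) :=
    div_lt_div₀ hxy (by linarith) hy0.le (by linarith)
  have hlog : Real.log (x / (1 - x)) < Real.log (y / (1 - y)) :=
    Real.log_lt_log (div_pos hx0 (by linarith)) hodds
  have hinv : 1 / y < 1 / x := one_div_lt_one_div_of_lt hx0 hxy
  have hinv' : 1 / (1 - x) < 1 / (1 - y) := one_div_lt_one_div_of_lt (by linarith) (by linarith)
  simp only [l]
  linarith

lemma continuousOn_l : ContinuousOn l (Ioo 0 1) := by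
  intro x ⟨hx0, hx1⟩
  have hx0' : x ≠ 0 := hx0.ne'
  have hx1' : 1 - x ≠ 0 := by linarith
  have hodds : x / (1 - x) ≠ 0 := div_ne_zero hx0' hx1'
  unfold l
  fun_prop (disch := assumption)

lemma sub_two_le_l {r : ℝ} (hr : 1 / 2 ≤ r) (hr1 : r < 1) : 1 / (1 - r) - 2 ≤ l r := by
  have hlog : 0 ≤ Real.log (r / (1 - r)) :=
    Real.log_nonneg (by rw [le_div_iff₀ (by linarith)]; linarith)
  have hinv : 1 / r ≤ 2 := by rw [div_le_iff₀ (by linarith)]; linarith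
  simp only [l]
  linarith

lemma exists_mem_Ico_l_eq {K : ℝ} (hK : 0 ≤ K) : ∃ r ∈ Ico (1 / 2 : ℝ) 1, l r = K := by
  set s : ℝ := 1 - 1 / (K + 2)
  have hinv : 1 / (K + 2) ≤ 1 / 2 := one_div_le_one_div_of_le (by norm_num) (by linarith)
  have hs : 1 / 2 ≤ s := by linarith
  have hs1 : s < 1 := sub_lt_self 1 (by positivity)
  have hls : K ≤ l s := by
    have := sub_two_le_l hs hs1
    rw [show 1 - s = 1 / (K + 2) by ring, one_div_one_div] at this
    linarith
  have hcont : ContinuousOn l (Icc (1 / 2) s) :=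
    continuousOn_l.mono fun x hx => ⟨by linarith [hx.1], by linarith [hx.2]⟩
  obtain ⟨r, hr, hlr⟩ := intermediate_value_Icc hs hcont ⟨l_half ▸ hK, hls⟩
  exact ⟨r, ⟨hr.1, hr.2.trans_lt hs1⟩, hlr⟩

lemma eq_one_sub_of_mul_one_sub_eq {r₁ r₂ : ℝ} (hne : r₁ ≠ r₂)
    (h : r₂ * (1 - r₂) = r₁ * (1 - r₁)) : r₁ = 1 - r₂ := by
  have hfac : (r₂ - r₁) * (1 - r₁ - r₂) = 0 := by linear_combination h
  rcases mul_eq_zero.1 hfac with h | h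
  · exact absurd (sub_eq_zero.1 h).symm hne
  · linarith

lemma eq_one_sub_and_l_eq {K r₁ r₂ : ℝ} (hne : r₁ ≠ r₂) (hl : l r₂ - l r₁ = 2 * K)
    (hq : 1 / (r₂ * (1 - r₂)) = 1 / (r₁ * (1 - r₁))) : r₁ = 1 - r₂ ∧ l r₂ = K := by
  have hsum : r₁ = 1 - r₂ :=
    eq_one_sub_of_mul_one_sub_eq hne (by simpa only [one_div, inv_inj] using hq)
  refine ⟨hsum, ?_⟩
  rw [hsum, l_one_sub] at hl
  linarith

theorem stmt_13 (K : ℝ) (hK : 0 < K) :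
    (∃! p : ℝ × ℝ, 0 < p.1 ∧ p.1 < p.2 ∧ p.2 < 1 ∧
      l p.2 - l p.1 = 2 * K ∧
      1 / (p.2 * (1 - p.2)) = 1 / (p.1 * (1 - p.1))) ∧
    (∀ r₁ r₂ : ℝ, 0 < r₁ → r₁ < r₂ → r₂ < 1 →
      l r₂ - l r₁ = 2 * K → 1 / (r₂ * (1 - r₂)) = 1 / (r₁ * (1 - r₁)) →
      r₁ = 1 - r₂ ∧ l r₂ = K) := by
  obtain ⟨r, ⟨hr_half, hr1⟩, hlr⟩ := exists_mem_Ico_l_eq hK.le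
  have hr : 1 / 2 < r := hr_half.lt_of_ne (by rintro rfl; rw [l_half] at hlr; linarith)
  refine ⟨⟨(1 - r, r), ⟨by linarith, by linarith, hr1, ?_, ?_⟩, ?_⟩,
    fun r₁ r₂ _ h12 _ hl hq => eq_one_sub_and_l_eq h12.ne hl hq⟩
  · rw [l_one_sub, hlr]; ring
  · rw [sub_sub_cancel, mul_comm]
  · rintro p ⟨hp₁, hp₁₂, hp₂, hl, hq⟩
    obtain ⟨hp₁_eq, hlp⟩ := eq_one_sub_and_l_eq hp₁₂.ne hl hq
    have hp₂_eq : p.2 = r :=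
      l_strictMonoOn.injOn ⟨by linarith, hp₂⟩ ⟨by linarith, hr1⟩ (hlp.trans hlr.symm)
    exact Prod.ext (by rw [hp₁_eq, hp₂_eq]) hp₂_eq
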